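/- arXiv:2507.15313 — 5 statements merged into one kernel-verified Lean document; each statement's English description precedes it below -/
import Mathlib

section
/- If w = uv is a c-epichristoffel word obtained as w = φ(a_{i_l} a_j) where φ is a composition of standard episturmian morphisms ψ_{a_{i_1}} ∘ ... ∘ ψ_{a_{i_{l-1}}}, u = φ(a_{i_l}) and v = φ(a_j), then the word uvv is also a c-epichristoffel word. -/
/-- The standard episturmian morphism `ψ_a`: `ψ_a(a) = a`, `ψ_a(b) = a b` for `b ≠ a`,
acting on words (lists). -/
def psi {α : Type*} [DecidableEq α] (a : α) (w : List α) : List α :=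
  w.flatMap (fun b => if b = a then [a] else [a, b])

/-- The morphism `ψ̄_a`: `ψ̄_a(a) = a`, `ψ̄_a(b) = b a` for `b ≠ a`. -/
def psiBar {α : Type*} [DecidableEq α] (a : α) (w : List α) : List α :=
  w.flatMap (fun b => if b = a then [a] else [b, a])

/-- Composition `ψ_{a₁} ∘ ψ_{a₂} ∘ ⋯ ∘ ψ_{aₗ}` of standard episturmian morphisms,
indexed by the list `[a₁, a₂, …, aₗ]`, applied to a word. -/
def psiComp {α : Type*} [DecidableEq α] (s : List α) (w : List α) : List α :=
  s.foldr psi w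

/-- The monoid of episturmian morphisms: generated by the `ψ_a`, the `ψ̄_a`
and letter permutations, under composition. -/
inductive IsEpisturmian {α : Type*} [DecidableEq α] : (List α → List α) → Prop
  | id : IsEpisturmian id
  | psi (a : α) (f : List α → List α) : IsEpisturmian f → IsEpisturmian (psi a ∘ f)
  | psiBar (a : α) (f : List α → List α) : IsEpisturmian f → IsEpisturmian (psiBar a ∘ f)
  | perm (σ : Equiv.Perm α) (f : List α → List α) :
      IsEpisturmian f → IsEpisturmian ((List.map σ) ∘ f)

/-- A word is c-epichristoffel if it is the image of a letter by an episturmian morphism. -/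
def CEpichristoffel {α : Type*} [DecidableEq α] (w : List α) : Prop :=
  ∃ (f : List α → List α) (a : α), IsEpisturmian f ∧ w = f [a]

theorem psi_append {α : Type*} [DecidableEq α] (a : α) (x y : List α) :
    psi a (x ++ y) = psi a x ++ psi a y := by
  simp [psi]

theorem psiComp_append {α : Type*} [DecidableEq α] (s : List α) (x y : List α) :
    psiComp s (x ++ y) = psiComp s x ++ psiComp s y := by
  induction s with
  | nil => rfl
  | cons a t ih =>
    show psi a (psiComp t (x ++ y)) = psi a (psiComp t x) ++ psi a (psiComp t y)
    rw [ih, psi_append]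

theorem isEpisturmian_psiComp_comp {α : Type*} [DecidableEq α] (s : List α)
    (f : List α → List α) (hf : IsEpisturmian f) : IsEpisturmian (psiComp s ∘ f) := by
  induction s with
  | nil => exact hf
  | cons a t ih =>
    have h : psiComp (a :: t) ∘ f = psi a ∘ (psiComp t ∘ f) := rfl
    rw [h]
    exact IsEpisturmian.psi a _ ih

/-- If `w = uv` is a c-epichristoffel word obtained as `w = φ(cd)` where
`φ = ψ_{a₁} ∘ ⋯ ∘ ψ_{aₗ₋₁}` is a composition of standard episturmian morphisms
(indexed by the list `s`), `u = φ(c)` and `v = φ(d)` with `c ≠ d`,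
then `u v v` is also a c-epichristoffel word. -/
theorem cEpichristoffel_uvv {α : Type*} [DecidableEq α] (s : List α) (c d : α)
    (hcd : c ≠ d) (u v w : List α)
    (hu : u = psiComp s [c]) (hv : v = psiComp s [d])
    (hw : w = u ++ v) (hwe : w = psiComp s [c, d]) (hepi : CEpichristoffel w) :
    CEpichristoffel (u ++ v ++ v) := by
  refine ⟨psiComp s ∘ psiBar d ∘ psiBar d, c, ?_, ?_⟩
  · exact isEpisturmian_psiComp_comp s _
      (IsEpisturmian.psiBar d _ (IsEpisturmian.psiBar d _ IsEpisturmian.id))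
  · have h1 : psiBar d (psiBar d [c]) = [c, d, d] := by
      simp [psiBar, hcd]
    show u ++ v ++ v = psiComp s (psiBar d (psiBar d [c]))
    rw [h1]
    have h2 : ([c, d, d] : List α) = [c] ++ [d] ++ [d] := rfl
    rw [h2, psiComp_append, psiComp_append, hu, hv]
end

section
/- For the tuple operator T on k-tuples of integers (which subtracts from a maximal entry the sum of all other entries), a k-tuple p of positive integers corresponds to an epichristoffel word if and only if iterating T on p eventually yields a tuple with a single entry equal to 1 and all other entries 0; in particular, for every m ≥ 1 the 3-tuple (1, 1, 2m) satisfies this condition. -/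
/-- One step of the tuple operator `T` on 3-tuples of integers: a maximal entry
`pᵢ` is replaced by `pᵢ − Σ_{j ≠ i} pⱼ`, the other entries are unchanged. -/
def TStep (p q : ℤ × ℤ × ℤ) : Prop :=
  (p.2.1 ≤ p.1 ∧ p.2.2 ≤ p.1 ∧ q = (p.1 - p.2.1 - p.2.2, p.2.1, p.2.2)) ∨
  (p.1 ≤ p.2.1 ∧ p.2.2 ≤ p.2.1 ∧ q = (p.1, p.2.1 - p.1 - p.2.2, p.2.2)) ∨
  (p.1 ≤ p.2.2 ∧ p.2.1 ≤ p.2.2 ∧ q = (p.1, p.2.1, p.2.2 - p.1 - p.2.1))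

/-- A 3-tuple of nonnegative integers is an epichristoffel 3-tuple if iterating `T`
eventually yields a tuple with a single entry equal to `1` and all other entries `0`. -/
def IsEpichristoffelTuple (p : ℤ × ℤ × ℤ) : Prop :=
  0 ≤ p.1 ∧ 0 ≤ p.2.1 ∧ 0 ≤ p.2.2 ∧
    ∃ q : ℤ × ℤ × ℤ, Relation.ReflTransGen TStep p q ∧
      (q = (1, 0, 0) ∨ q = (0, 1, 0) ∨ q = (0, 0, 1))

lemma reaches (m : ℕ) (hm : 1 ≤ m) :
    Relation.ReflTransGen TStep (1, 1, 2 * (m : ℤ)) (0, 1, 0) := by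
  induction m with
  | zero => omega
  | succ n ih =>
    push_cast
    rcases Nat.eq_or_lt_of_le hm with h | h
    · have h1 : (n : ℤ) = 0 := by omega
      rw [h1]
      have e1 : TStep (1, 1, 2 * ((0 : ℤ) + 1)) (1, 1, 0) := by
        right; right
        exact ⟨by norm_num, by norm_num, by norm_num⟩
      have e2 : TStep ((1 : ℤ), 1, 0) (0, 1, 0) := by
        left
        exact ⟨le_refl _, by norm_num, by norm_num⟩
      exact Relation.ReflTransGen.trans (Relation.ReflTransGen.single e1)
        (Relation.ReflTransGen.single e2)
    · have hn : 1 ≤ n := by omega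
      have hni : (1 : ℤ) ≤ (n : ℤ) := by exact_mod_cast hn
      have e1 : TStep (1, 1, 2 * ((n : ℤ) + 1)) (1, 1, 2 * (n : ℤ)) := by
        right; right
        exact ⟨by simp; omega, by simp; omega, by simp [Prod.ext_iff]; ring⟩
      exact Relation.ReflTransGen.trans (Relation.ReflTransGen.single e1) (ih hn)

/-- For every `m ≥ 1`, the 3-tuple `(1, 1, 2m)` is an epichristoffel 3-tuple:
iterating `T` on it yields a tuple with a single entry `1` and the others `0`. -/
theorem one_one_even_isEpichristoffelTuple (m : ℕ) (hm : 1 ≤ m) :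
    IsEpichristoffelTuple (1, 1, 2 * (m : ℤ)) := by
  exact ⟨by norm_num, by norm_num, by positivity, (0, 1, 0), reaches m hm, Or.inr (Or.inl rfl)⟩
end

section
/- If (u, v) is a node in the epichristoffel tree with root an epichristoffel word w = u'v' where u' and v' are both the lexicographically least elements of their conjugacy classes and u' < v' lexicographically, then in every node (u, v) of the tree generated by the rules (u,v) ↦ (u, uv) and (u,v) ↦ (uv, v), the word uv is the lexicographically least element of its conjugacy class. -/
/-- A Lyndon word: nonempty and lexicographically strictly smaller than all of its
nontrivial cyclic rotations. -/
def IsLyndon {α : Type*} [LinearOrder α] (w : List α) : Prop :=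
  w ≠ [] ∧ ∀ n : ℕ, 0 < n → n < w.length → w < w.rotate n

/-- A word is lexicographically least in its conjugacy class if no cyclic rotation
of it is strictly smaller. -/
def MinInConjClass {α : Type*} [LinearOrder α] (w : List α) : Prop :=
  ∀ n : ℕ, ¬ (w.rotate n < w)

/-- Membership in the (epichristoffel) tree with root `r`: the node `(u, v)` has
left child `(u, uv)` and right child `(uv, v)`. -/
inductive TreeNode {α : Type*} (r : List α × List α) : List α × List α → Prop
  | root : TreeNode r r
  | left (u v : List α) : TreeNode r (u, v) → TreeNode r (u, u ++ v)
  | right (u v : List α) : TreeNode r (u, v) → TreeNode r (u ++ v, v)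

/-!
A word is Lyndon exactly when it is nonempty and strictly smaller than each of its proper
nonempty suffixes. With this characterisation, if `u < v` are Lyndon words then `uv < v` and
`uv` is again Lyndon. Hence every node `(u, v)` of the tree keeps the invariant "`u` and `v` are
Lyndon and `u < v`": the left child `(u, uv)` because `u` is a proper prefix of `uv`, the right
child `(uv, v)` because `uv < v`. So every `uv` is Lyndon, and a Lyndon word is least among its
rotations.
-/

section

variable {α : Type*} [LinearOrder α]

namespace List

theorem append_lt_append_left_iff (u : List α) {x y : List α} : u ++ x < u ++ y ↔ x < y :=
  ⟨fun h => by_contra fun hxy => append_left_le (l₁ := u) (List.not_lt.1 hxy) h, append_left_lt⟩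

theorem lt_append_of_ne_nil (u : List α) {t : List α} (ht : t ≠ []) : u < u ++ t := by
  obtain ⟨a, t, rfl⟩ := exists_cons_of_ne_nil ht
  simpa using append_left_lt (l₁ := u) (nil_lt_cons a t)

theorem append_lt_append_of_lt_of_not_prefix {u s : List α} (h : u < s) (hp : ¬ u <+: s)
    (x y : List α) : u ++ x < s ++ y := by
  induction (h : Lex (· < ·) u s) with
  | nil => exact absurd nil_prefix hp
  | cons _ ih => exact Lex.cons (ih (by simpa using hp))
  | rel hab => exact Lex.rel hab

theorem append_lt_append_of_lt_of_length_le {u s : List α} (h : u < s)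
    (hl : s.length ≤ u.length) (x y : List α) : u ++ x < s ++ y :=
  append_lt_append_of_lt_of_not_prefix h
    (fun hp => h.ne (hp.eq_of_length (le_antisymm hp.length_le hl))) x y

end List

namespace IsLyndon

variable {u v w p s : List α}

theorem lt_append_of_append_eq (h : IsLyndon w) (hw : w = p ++ s) (hp : p ≠ []) (hs : s ≠ []) :
    w < s ++ p := by
  subst hw
  have hlen : p.length < (p ++ s).length := by simp [List.length_pos_iff.2 hs]
  simpa [List.rotate_append_length_eq] using h.2 p.length (List.length_pos_iff.2 hp) hlen

theorem lt_suffix (h : IsLyndon w) (hw : w = p ++ s) (hp : p ≠ []) (hs : s ≠ []) : w < s := by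
  have hsp : w < s ++ p := h.lt_append_of_append_eq hw hp hs
  have hlen := congrArg List.length hw
  simp only [List.length_append] at hlen
  have hp0 := List.length_pos_iff.2 hp
  by_contra hws
  have hsw : s < w := lt_of_le_of_ne (not_lt.1 hws) fun e => by rw [e] at hlen; omega
  by_cases hpre : s <+: w
  · -- the border case `w = p ++ s = s ++ t`, refuted through the rotation `t ++ s`
    obtain ⟨t, hts⟩ := hpre
    have ht : t ≠ [] := by
      rintro rfl
      rw [List.append_nil] at hts
      exact hsw.ne hts
    have hwt : w < t ++ s := h.lt_append_of_append_eq hts.symm hs ht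
    have htp : t < p := by rwa [← hts, List.append_lt_append_left_iff] at hsp
    have htlen := congrArg List.length hts
    simp only [List.length_append] at htlen
    have hts' : t ++ s < w := by
      rw [hw]
      exact List.append_lt_append_of_lt_of_length_le htp (by omega) s s
    exact lt_asymm hwt hts'
  · have hspw : s ++ p < w ++ [] := List.append_lt_append_of_lt_of_not_prefix hsw hpre p []
    rw [List.append_nil] at hspw
    exact lt_asymm hsp hspw

theorem of_lt_suffix (hne : w ≠ [])
    (h : ∀ p s, w = p ++ s → p ≠ [] → s ≠ [] → w < s) : IsLyndon w := by
  refine ⟨hne, fun n hn hnw => ?_⟩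
  rw [List.rotate_eq_drop_append_take hnw.le]
  have hdrop : w < w.drop n :=
    h _ _ (List.take_append_drop n w).symm
      (by simp only [ne_eq, List.take_eq_nil_iff, hne, or_false]; omega)
      (by simp only [ne_eq, List.drop_eq_nil_iff, not_le]; exact hnw)
  simpa using List.append_lt_append_of_lt_of_length_le hdrop (by simp) [] (w.take n)

theorem append_lt (hv : IsLyndon v) (hu : u ≠ []) (h : u < v) : u ++ v < v := by
  by_cases hpre : u <+: v
  · obtain ⟨t, rfl⟩ := hpre
    have ht : t ≠ [] := by
      rintro rfl
      simp at h
    exact List.append_left_lt (hv.lt_suffix rfl hu ht)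
  · simpa using List.append_lt_append_of_lt_of_not_prefix h hpre v []

theorem append (hu : IsLyndon u) (hv : IsLyndon v) (h : u < v) : IsLyndon (u ++ v) := by
  have huv : u ++ v < v := hv.append_lt hu.1 h
  refine of_lt_suffix (by simp [hu.1]) fun p s hw hp hs => ?_
  rcases List.append_eq_append_iff.1 hw with ⟨q, rfl, rfl⟩ | ⟨q, rfl, rfl⟩
  · rcases eq_or_ne q [] with rfl | hq
    · simpa using huv
    · exact huv.trans (hv.lt_suffix rfl hq hs)
  · rcases eq_or_ne q [] with rfl | hq
    · simpa using huv
    · have hlen : q.length ≤ (p ++ q).length := by simp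
      exact List.append_lt_append_of_lt_of_length_le (hu.lt_suffix rfl hp hq) hlen v v

theorem minInConjClass (h : IsLyndon w) : MinInConjClass w := by
  intro n hn
  rw [← List.rotate_mod] at hn
  rcases (n % w.length).eq_zero_or_pos with h0 | h0
  · rw [h0, List.rotate_zero] at hn
    exact lt_irrefl _ hn
  · exact lt_asymm hn (h.2 _ h0 (Nat.mod_lt _ (List.length_pos_iff.2 h.1)))

end IsLyndon

theorem TreeNode.isLyndon_and_lt {r p : List α × List α} (h₁ : IsLyndon r.1)
    (h₂ : IsLyndon r.2) (hr : r.1 < r.2) (hnode : TreeNode r p) :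
    IsLyndon p.1 ∧ IsLyndon p.2 ∧ p.1 < p.2 := by
  induction hnode with
  | root => exact ⟨h₁, h₂, hr⟩
  | left u v _ ih =>
    obtain ⟨hu, hv, huv⟩ := ih
    exact ⟨hu, hu.append hv huv, List.lt_append_of_ne_nil u hv.1⟩
  | right u v _ ih =>
    obtain ⟨hu, hv, huv⟩ := ih
    exact ⟨hu.append hv huv, hv, hv.append_lt hu.1 huv⟩

end

theorem tree_min_in_conj_class_general {α : Type*} [LinearOrder α] (u' v' : List α)
    (hu : IsLyndon u') (hv : IsLyndon v') (hlt : u' < v')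
    (u v : List α) (hnode : TreeNode (u', v') (u, v)) :
    MinInConjClass (u ++ v) := by
  obtain ⟨hu, hv, huv⟩ := hnode.isLyndon_and_lt hu hv hlt
  exact (hu.append hv huv).minInConjClass

/-- If the root `(u', v')` of the epichristoffel tree consists of two Lyndon words
(each least in its conjugacy class) with `u' < v'`, and `u'v'` is least in its
conjugacy class, then for every node `(u, v)` of the tree, the word `uv` is the
lexicographically least element of its conjugacy class. -/
theorem tree_min_in_conj_class {α : Type*} [LinearOrder α] (u' v' : List α)
    (hu : IsLyndon u') (hv : IsLyndon v') (hlt : u' < v')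
    (hroot : MinInConjClass (u' ++ v'))
    (u v : List α) (hnode : TreeNode (u', v') (u, v)) :
    MinInConjClass (u ++ v) :=
  tree_min_in_conj_class_general u' v' hu hv hlt u v hnode
end

section
/- If a/b is the k-th entry (from the left) of the n-th row of the Stern–Brocot tree with n > 1, then the k-th entry from the left of the (n+1)-th row is a/(a+b). -/
/-- Formal fractions are pairs `(numerator, denominator)`; the mediant of
`a/b` and `c/d` is `(a+c)/(b+d)`, i.e. componentwise addition. -/
def insertMediants : List (ℕ × ℕ) → List (ℕ × ℕ)
  | [] => []
  | [x] => [x]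
  | x :: y :: t => x :: (x.1 + y.1, x.2 + y.2) :: insertMediants (y :: t)

/-- The Stern–Brocot sequence: `S 0 = (0/1, 1/0)` and `S (n+1)` is obtained from
`S n` by inserting mediants between consecutive fractions. -/
def sbSeq : ℕ → List (ℕ × ℕ)
  | 0 => [(0, 1), (1, 0)]
  | n + 1 => insertMediants (sbSeq n)

/-- The entries at odd indices of a list (the newly inserted mediants). -/
def oddEntries : List (ℕ × ℕ) → List (ℕ × ℕ)
  | [] => []
  | [_] => []
  | _ :: y :: t => y :: oddEntries t

/-- The `n`-th row of the Stern–Brocot tree: the mediants newly inserted at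
the `n`-th step, in left-to-right order. -/
def sbRow (n : ℕ) : List (ℕ × ℕ) :=
  oddEntries (sbSeq n)

def SBL (p : ℕ × ℕ) : ℕ × ℕ := (p.1, p.1 + p.2)

lemma insertMediants_map :
    ∀ l : List (ℕ × ℕ), insertMediants (l.map SBL) = (insertMediants l).map SBL := by
  intro l
  induction l using insertMediants.induct with
  | case1 => rfl
  | case2 x => rfl
  | case3 x y t ih =>
      simp only [List.map_cons] at ih ⊢
      simp only [insertMediants, List.map_cons]
      rw [ih]
      simp [SBL, Prod.ext_iff]
      omega

lemma insertMediants_prefix :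
    ∀ (p r : List (ℕ × ℕ)), p ≠ [] → insertMediants p <+: insertMediants (p ++ r) := by
  intro p
  induction p using insertMediants.induct with
  | case1 => simp
  | case2 x =>
      intro r _
      match r with
      | [] => simp
      | y :: t => exact ⟨(x.1 + y.1, x.2 + y.2) :: insertMediants (y :: t), rfl⟩
  | case3 x y t ih =>
      intro r _
      simp only [List.cons_append, insertMediants]
      obtain ⟨s, hs⟩ := ih r (by simp)
      exact ⟨s, by simp [hs]⟩

lemma oddEntries_map :
    ∀ l : List (ℕ × ℕ), oddEntries (l.map SBL) = (oddEntries l).map SBL := by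
  intro l
  induction l using oddEntries.induct with
  | case1 => rfl
  | case2 x => rfl
  | case3 x y t ih =>
      simp only [List.map_cons] at ih ⊢
      simp only [oddEntries, ih, List.map_cons]

lemma oddEntries_prefix :
    ∀ (p r : List (ℕ × ℕ)), Odd p.length → oddEntries p <+: oddEntries (p ++ r) := by
  intro p
  induction p using oddEntries.induct with
  | case1 => simp [oddEntries]
  | case2 x => intro r _; simp [oddEntries]
  | case3 x y t ih =>
      intro r hodd
      simp only [List.length_cons] at hodd
      obtain ⟨m, hm⟩ := hodd
      have ht : Odd t.length := ⟨m - 1, by omega⟩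
      simp only [List.cons_append, oddEntries]
      obtain ⟨s, hs⟩ := ih r ht
      exact ⟨s, by simp [hs]⟩

lemma length_insertMediants : ∀ l : List (ℕ × ℕ),
    (insertMediants l).length = 2 * l.length - 1 := by
  intro l
  induction l using insertMediants.induct with
  | case1 => rfl
  | case2 x => rfl
  | case3 x y t ih => simp [insertMediants, ih] at *; omega

lemma length_sbSeq (n : ℕ) : (sbSeq n).length = 2 ^ n + 1 := by
  induction n with
  | zero => rfl
  | succ n ih =>
      show (insertMediants (sbSeq n)).length = _
      rw [length_insertMediants, ih, pow_succ]
      omega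

lemma sbSeq_ne_nil (n : ℕ) : sbSeq n ≠ [] := by
  have := length_sbSeq n
  intro h; simp [h] at this

lemma map_sbSeq_prefix (n : ℕ) : (sbSeq n).map SBL <+: sbSeq (n + 1) := by
  induction n with
  | zero => decide
  | succ n ih =>
      obtain ⟨r, hr⟩ := ih
      have h1 : sbSeq (n + 1 + 1) = insertMediants ((sbSeq n).map SBL ++ r) := by
        rw [hr]; rfl
      have h2 : (sbSeq (n + 1)).map SBL = insertMediants ((sbSeq n).map SBL) :=
        (insertMediants_map (sbSeq n)).symm
      rw [h1, h2]
      exact insertMediants_prefix _ r (by simp [sbSeq_ne_nil n])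

/-- If `a/b` is the `k`-th entry (from the left, 0-indexed) of the `n`-th row of the
Stern–Brocot tree, with `n > 1`, then the `k`-th entry of the `(n+1)`-th row is
`a/(a+b)`. -/
theorem sternBrocot_left_child (n k : ℕ) (hn : 1 < n) (a b : ℕ)
    (h : (sbRow n)[k]? = some (a, b)) :
    (sbRow (n + 1))[k]? = some (a, a + b) := by
  have hpre : (sbRow n).map SBL <+: sbRow (n + 1) := by
    obtain ⟨r, hr⟩ := map_sbSeq_prefix n
    have hodd : Odd ((sbSeq n).map SBL).length := by
      rw [List.length_map, length_sbSeq]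
      have h2 : 2 ^ n = 2 * 2 ^ (n - 1) := by
        rw [← pow_succ']; congr 1; omega
      exact ⟨2 ^ (n - 1), by omega⟩
    have hp := oddEntries_prefix _ r hodd
    rw [hr, oddEntries_map] at hp
    exact hp
  obtain ⟨hk, -⟩ := List.getElem?_eq_some_iff.mp h
  obtain ⟨r, hr⟩ := hpre
  have heq : (sbRow (n + 1))[k]? = ((sbRow n).map SBL)[k]? := by
    rw [← hr, List.getElem?_append, if_pos (by simpa using hk)]
  rw [heq, List.getElem?_map, h]
  rfl
end

section
/- Over a 3-letter alphabet, for every integer n ≥ 4 with n ≠ 5, there exists an epichristoffel 3-tuple of positive integers summing to n; equivalently, there exists an epichristoffel word of length n using all three letters, for every n ≥ 4 except n = 5. -/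
lemma chainA : ∀ k : ℕ, Relation.ReflTransGen TStep (1, 0, (k:ℤ)) (1,0,0)
  | 0 => .refl
  | (k+1) => .head (Or.inr (Or.inr ⟨by push_cast; omega, by push_cast; omega,
      by simp only [Prod.mk.injEq, true_and, and_true]; push_cast; omega⟩)) (chainA k)

lemma chainB : ∀ k : ℕ, Relation.ReflTransGen TStep (1, 1, 2*(k:ℤ)) (0,1,0)
  | 0 => .head (b := (0,1,0)) (Or.inl ⟨by norm_num, by norm_num, by norm_num⟩) .refl
  | (k+1) => .head (Or.inr (Or.inr ⟨by push_cast; omega, by push_cast; omega,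
      by simp only [Prod.mk.injEq, true_and, and_true]; push_cast; omega⟩)) (chainB k)

lemma chainC : ∀ k : ℕ, Relation.ReflTransGen TStep (1, 2, 3*(k:ℤ)+1) (1,0,0)
  | 0 => .head (b := ((1:ℤ),0,1)) (Or.inr (Or.inl ⟨by norm_num, by norm_num, by norm_num⟩)) (chainA 1)
  | (k+1) => .head (Or.inr (Or.inr ⟨by push_cast; omega, by push_cast; omega,
      by simp only [Prod.mk.injEq, true_and, and_true]; push_cast; omega⟩)) (chainC k)

lemma chainD : ∀ k : ℕ, Relation.ReflTransGen TStep (1, 2, 3*(k:ℤ)) (0,1,0)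
  | 0 => .head (b := (1,1,0)) (Or.inr (Or.inl ⟨by norm_num, by norm_num, by norm_num⟩))
      (.head (b := (0,1,0)) (Or.inl ⟨by norm_num, by norm_num, by norm_num⟩) .refl)
  | (k+1) => .head (Or.inr (Or.inr ⟨by push_cast; omega, by push_cast; omega,
      by simp only [Prod.mk.injEq, true_and, and_true]; push_cast; omega⟩)) (chainD k)

lemma chainE : ∀ m : ℕ, Relation.ReflTransGen TStep (2, 0, 2*(m:ℤ)+1) (1,0,0)
  | 0 => .head (b := ((1:ℤ),0,1)) (Or.inl ⟨by norm_num, by norm_num, by norm_num⟩) (chainA 1)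
  | (m+1) => .head (Or.inr (Or.inr ⟨by push_cast; omega, by push_cast; omega,
      by simp only [Prod.mk.injEq, true_and, and_true]; push_cast; omega⟩)) (chainE m)

lemma chainF (m : ℕ) :
    Relation.ReflTransGen TStep (2, 2*(m:ℤ)+3, 4*(m:ℤ)+6) (1,0,0) :=
  .head (b := (2, 2*(m:ℤ)+3, 2*(m:ℤ)+1)) (Or.inr (Or.inr ⟨by push_cast; omega, by push_cast; omega,
      by simp only [Prod.mk.injEq, true_and, and_true]; push_cast; omega⟩))
   (.head (b := (2, 0, 2*(m:ℤ)+1)) (Or.inr (Or.inl ⟨by push_cast; omega, by push_cast; omega,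
      by simp only [Prod.mk.injEq, true_and, and_true]; push_cast; omega⟩)) (chainE m))

/-- Over a 3-letter alphabet, for every `n ≥ 4` with `n ≠ 5` there exists an
epichristoffel 3-tuple of positive integers summing to `n` (i.e. an epichristoffel
word of length `n` using all three letters). -/
theorem epichristoffelTuple_of_length (n : ℕ) (hn : 4 ≤ n) (hne : n ≠ 5) :
    ∃ p : ℤ × ℤ × ℤ, IsEpichristoffelTuple p ∧
      1 ≤ p.1 ∧ 1 ≤ p.2.1 ∧ 1 ≤ p.2.2 ∧ p.1 + p.2.1 + p.2.2 = (n : ℤ) := by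
  obtain ⟨q, r, hr, rfl⟩ : ∃ q r, r < 6 ∧ n = 6*q + r :=
    ⟨n/6, n%6, Nat.mod_lt _ (by norm_num), by omega⟩
  interval_cases r
  · -- n = 6q, q ≥ 1
    obtain ⟨q', rfl⟩ : ∃ q', q = q' + 1 := ⟨q - 1, by omega⟩
    exact ⟨(1, 1, 2*((3*q'+2 : ℕ):ℤ)),
      ⟨by norm_num, by norm_num, by positivity,
        (0,1,0), chainB _, Or.inr (Or.inl rfl)⟩,
      by norm_num, by norm_num, by push_cast; omega, by push_cast; ring⟩
  · -- n = 6q+1, q ≥ 1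
    obtain ⟨q', rfl⟩ : ∃ q', q = q' + 1 := ⟨q - 1, by omega⟩
    exact ⟨(1, 2, 3*((2*q'+1 : ℕ):ℤ)+1),
      ⟨by norm_num, by norm_num, by positivity,
        (1,0,0), chainC _, Or.inl rfl⟩,
      by norm_num, by norm_num, by push_cast; omega, by push_cast; ring⟩
  · -- n = 6q+2, q ≥ 1
    obtain ⟨q', rfl⟩ : ∃ q', q = q' + 1 := ⟨q - 1, by omega⟩
    exact ⟨(1, 1, 2*((3*q'+3 : ℕ):ℤ)),
      ⟨by norm_num, by norm_num, by positivity,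
        (0,1,0), chainB _, Or.inr (Or.inl rfl)⟩,
      by norm_num, by norm_num, by push_cast; omega, by push_cast; ring⟩
  · -- n = 6q+3, q ≥ 1
    obtain ⟨q', rfl⟩ : ∃ q', q = q' + 1 := ⟨q - 1, by omega⟩
    exact ⟨(1, 2, 3*((2*q'+2 : ℕ):ℤ)),
      ⟨by norm_num, by norm_num, by positivity,
        (0,1,0), chainD _, Or.inr (Or.inl rfl)⟩,
      by norm_num, by norm_num, by push_cast; omega, by push_cast; ring⟩
  · -- n = 6q+4
    exact ⟨(1, 1, 2*((3*q+1 : ℕ):ℤ)),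
      ⟨by norm_num, by norm_num, by positivity,
        (0,1,0), chainB _, Or.inr (Or.inl rfl)⟩,
      by norm_num, by norm_num, by push_cast; omega, by push_cast; ring⟩
  · -- n = 6q+5, q ≥ 1
    obtain ⟨q', rfl⟩ : ∃ q', q = q' + 1 := ⟨q - 1, by omega⟩
    exact ⟨(2, 2*((q' : ℕ):ℤ)+3, 4*((q' : ℕ):ℤ)+6),
      ⟨by norm_num, by positivity, by positivity,
        (1,0,0), chainF _, Or.inl rfl⟩,
      by norm_num, by push_cast; omega, by push_cast; omega, by push_cast; ring⟩
end
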